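/- arXiv:1411.0349 — 5 statements merged into one kernel-verified Lean document; each statement's English description precedes it below -/
import Mathlib

section
/- For a two-person game form g : S₁ × S₂ → A, Nash-solvability (every pair of real-valued payoffs (u₁,u₂) on A admits a Nash equilibrium), zero-sum solvability (every zero-sum payoff pair admits a saddle point), and ±1-solvability (every zero-sum payoff pair taking only values +1 and −1 admits a saddle point) are equivalent. -/
/-! STATEMENT 2: for a two-person game form `g : S₁ × S₂ → A`, Nash-solvability,
zero-sum solvability and ±1-solvability are equivalent. -/

section GameForm

variable {S₁ S₂ A : Type*}

/-- `(s₁, s₂)` is a Nash equilibrium of the game `(g, u₁, u₂)`. -/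
def IsNashEq (g : S₁ → S₂ → A) (u₁ u₂ : A → ℝ) (s₁ : S₁) (s₂ : S₂) : Prop :=
  (∀ t₁ : S₁, u₁ (g t₁ s₂) ≤ u₁ (g s₁ s₂)) ∧ (∀ t₂ : S₂, u₂ (g s₁ t₂) ≤ u₂ (g s₁ s₂))

/-- Nash-solvability: every pair of real-valued payoffs admits a Nash equilibrium. -/
def NashSolvable (g : S₁ → S₂ → A) : Prop :=
  ∀ u₁ u₂ : A → ℝ, ∃ s₁ s₂, IsNashEq g u₁ u₂ s₁ s₂

/-- Zero-sum solvability: every zero-sum payoff pair admits a saddle point. -/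
def ZeroSumSolvable (g : S₁ → S₂ → A) : Prop :=
  ∀ u₁ u₂ : A → ℝ, (∀ a, u₁ a + u₂ a = 0) → ∃ s₁ s₂, IsNashEq g u₁ u₂ s₁ s₂

/-- ±1-solvability: every zero-sum payoff pair taking only the values `+1` and
`-1` admits a saddle point. -/
def PMOneSolvable (g : S₁ → S₂ → A) : Prop :=
  ∀ u₁ u₂ : A → ℝ, (∀ a, u₁ a + u₂ a = 0) →
    (∀ a, u₁ a = 1 ∨ u₁ a = -1) →
    ∃ s₁ s₂, IsNashEq g u₁ u₂ s₁ s₂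

end GameForm


open Finset

theorem Finset.sum_pow_lt_pow_of_card_lt {ι : Type*} {s : Finset ι} {f : ι → ℕ} {m n : ℕ}
    (hs : #s < m) (hf : ∀ i ∈ s, f i < n) : ∑ i ∈ s, m ^ f i < m ^ n := by
  rcases s.eq_empty_or_nonempty with rfl | ⟨i, hi⟩
  · simpa using Nat.pow_pos (n := n) (Nat.zero_lt_of_lt hs)
  obtain ⟨k, rfl⟩ : ∃ k, n = k + 1 := ⟨n - 1, by have := hf i hi; omega⟩
  calc ∑ i ∈ s, m ^ f i ≤ #s • m ^ k :=
        sum_le_card_nsmul _ _ _ fun i hi =>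
          Nat.pow_le_pow_right (by omega) (Nat.lt_succ_iff.1 (hf i hi))
    _ < m ^ (k + 1) := by
        rw [smul_eq_mul, pow_succ']
        exact Nat.mul_lt_mul_of_pos_right hs (Nat.pow_pos (by omega))

section Potential

variable {A β : Type*} [Preorder β] (u : A → β)

noncomputable def numAbove (a : A) : ℕ := {b | u a < u b}.ncard

theorem numAbove_lt_numAbove [Finite A] {a b : A} (h : u a < u b) :
    numAbove u b < numAbove u a :=
  Set.ncard_lt_ncard ⟨fun _ hc => h.trans hc, fun hsub => lt_irrefl _ (hsub h)⟩ (Set.toFinite _)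

/-- Weights in base `card A + 1`, so that one outcome outweighs any set of outcomes strictly
above it. -/
noncomputable def abovePotential [Fintype A] (B : Finset A) : ℕ :=
  ∑ b ∈ B, (Fintype.card A + 1) ^ numAbove u b

theorem abovePotential_erase_union_lt [Fintype A] [DecidableEq A] [DecidableLT β]
    {B : Finset A} {b : A} (hb : b ∈ B) :
    abovePotential u (B.erase b ∪ ({c | u b < u c} : Finset A)) < abovePotential u B := by
  have h_above :
      abovePotential u ({c | u b < u c} : Finset A) < (Fintype.card A + 1) ^ numAbove u b :=
    Finset.sum_pow_lt_pow_of_card_lt (Nat.lt_succ_of_le (card_le_univ _))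
      fun c hc => numAbove_lt_numAbove u (mem_filter.1 hc).2
  calc abovePotential u (B.erase b ∪ ({c | u b < u c} : Finset A))
      ≤ abovePotential u (B.erase b) + abovePotential u ({c | u b < u c} : Finset A) :=
        (Nat.le_add_right _ _).trans_eq sum_union_inter
    _ < abovePotential u (B.erase b) + (Fintype.card A + 1) ^ numAbove u b := by omega
    _ = abovePotential u B := sum_erase_add _ _ hb

end Potential

section Tightness

variable {S₁ S₂ A : Type*}

/-- Tightness in the sense of Gurvich: for every set of outcomes, player 1 can force it or
player 2 can force its complement. -/
def IsTight (g : S₁ → S₂ → A) : Prop :=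
  ∀ B : Set A, (∃ s₁, ∀ s₂, g s₁ s₂ ∈ B) ∨ ∃ s₂, ∀ s₁, g s₁ s₂ ∉ B

theorem NashSolvable.zeroSumSolvable {g : S₁ → S₂ → A} (h : NashSolvable g) :
    ZeroSumSolvable g :=
  fun u₁ u₂ _ => h u₁ u₂

theorem ZeroSumSolvable.pmOneSolvable {g : S₁ → S₂ → A} (h : ZeroSumSolvable g) :
    PMOneSolvable g :=
  fun u₁ u₂ hzero _ => h u₁ u₂ hzero

/-- A saddle point of the game paying `+1` on `B` and `-1` off `B` to player 1 lies in a row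
inside `B` or in a column outside `B`. -/
theorem PMOneSolvable.isTight {g : S₁ → S₂ → A} (h : PMOneSolvable g) : IsTight g := by
  classical
  intro B
  let w : A → ℝ := fun a => if a ∈ B then 1 else -1
  obtain ⟨s₁, s₂, h₁, h₂⟩ :=
    h w (fun a => -w a) (fun a => add_neg_cancel _) fun a => by unfold w; split_ifs <;> simp
  by_cases hs : g s₁ s₂ ∈ B
  · refine .inl ⟨s₁, fun t => by_contra fun ht => ?_⟩
    have := h₂ t
    norm_num [w, hs, ht] at this
  · refine .inr ⟨s₂, fun t ht => ?_⟩
    have := h₁ t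
    norm_num [w, hs, ht] at this

/-- If no Nash equilibrium exists and row `i` lies in `B`, remove from `B` player 2's favourite
outcome `b` of row `i` and add everything player 1 strictly prefers to `b`: every column still
meets the new set, since in a column through `b` player 1 has a profitable deviation. -/
theorem exists_abovePotential_lt_of_row_subset [Fintype S₂] [Nonempty S₂] [Fintype A]
    {g : S₁ → S₂ → A} {u₁ u₂ : A → ℝ} (hne : ∀ s₁ s₂, ¬IsNashEq g u₁ u₂ s₁ s₂)
    {B : Finset A} {i : S₁} (hi : ∀ s₂, g i s₂ ∈ B) :
    ∃ B' : Finset A, (∀ s₂, ∃ s₁, g s₁ s₂ ∈ B') ∧ abovePotential u₁ B' < abovePotential u₁ B := by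
  classical
  obtain ⟨j₀, -, hj₀⟩ := exists_max_image univ (fun j => u₂ (g i j)) univ_nonempty
  refine ⟨B.erase (g i j₀) ∪ ({c | u₁ (g i j₀) < u₁ c} : Finset A), fun j => ?_,
    abovePotential_erase_union_lt u₁ (hi j₀)⟩
  by_cases hj : g i j = g i j₀
  · obtain ⟨t, ht⟩ : ∃ t, u₁ (g i j₀) < u₁ (g t j) := by
      by_contra! hstay
      exact hne i j ⟨fun t => hj ▸ hstay t, fun t => hj ▸ hj₀ t (mem_univ t)⟩
    exact ⟨t, mem_union_right _ (mem_filter.2 ⟨mem_univ _, ht⟩)⟩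
  · exact ⟨i, mem_union_left _ (mem_erase.2 ⟨hj, hi j⟩)⟩

/-- Among the sets meeting every column take one of least potential: tightness puts a row inside
it, and then its potential can be lowered. -/
theorem IsTight.nashSolvable [Fintype S₂] [Fintype A] [Nonempty S₁] [Nonempty S₂]
    {g : S₁ → S₂ → A} (hg : IsTight g) : NashSolvable g := by
  classical
  intro u₁ u₂
  by_contra! hne
  obtain ⟨B, hBmem, hmin⟩ :=
    exists_min_image ({B | ∀ s₂, ∃ s₁, g s₁ s₂ ∈ B} : Finset (Finset A)) (abovePotential u₁)
      ⟨univ, mem_filter.2 ⟨mem_univ _, fun _ => ⟨Classical.arbitrary S₁, mem_univ _⟩⟩⟩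
  have hB : ∀ s₂, ∃ s₁, g s₁ s₂ ∈ B := (mem_filter.1 hBmem).2
  obtain ⟨i, hi⟩ := (hg B).resolve_right fun ⟨j, hj⟩ =>
    let ⟨s₁, hs₁⟩ := hB j; hj s₁ hs₁
  obtain ⟨B', hB', hlt⟩ := exists_abovePotential_lt_of_row_subset hne hi
  exact (hmin B' (mem_filter.2 ⟨mem_univ _, hB'⟩)).not_gt hlt

end Tightness

theorem solvability_equivalences_general
    {S₁ S₂ A : Type*} [Fintype S₂] [Fintype A]
    [Nonempty S₁] [Nonempty S₂]
    (g : S₁ → S₂ → A) :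
    (NashSolvable g ↔ ZeroSumSolvable g) ∧
    (ZeroSumSolvable g ↔ PMOneSolvable g) := by
  have pmOne_nash : PMOneSolvable g → NashSolvable g := fun h => h.isTight.nashSolvable
  exact ⟨⟨NashSolvable.zeroSumSolvable, fun h => pmOne_nash h.pmOneSolvable⟩,
    ⟨ZeroSumSolvable.pmOneSolvable, fun h => (pmOne_nash h).zeroSumSolvable⟩⟩

/-- For every finite two-person game form the three solvability notions are
equivalent. -/
theorem solvability_equivalences
    {S₁ S₂ A : Type*} [Fintype S₁] [Fintype S₂] [Fintype A]
    [Nonempty S₁] [Nonempty S₂]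
    (g : S₁ → S₂ → A) :
    (NashSolvable g ↔ ZeroSumSolvable g) ∧
    (ZeroSumSolvable g ↔ PMOneSolvable g) :=
  solvability_equivalences_general g
end

section
/- Consider the digraph G₂ with non-terminal vertices v₁, v₂ forming a directed 2-cycle, terminals a₁, a₂, and edges (v₁,a₁), (v₂,a₂); player 1 controls v₁, player 2 controls v₂. With preferences o₁: c > a₁ > a₂ and o₂: a₁ > a₂ > c (where c is the cycle outcome), for each fixed initial position (v₁ or v₂) a Nash equilibrium in pure stationary strategies exists, but no single strategy profile is a Nash equilibrium with respect to both initial positions simultaneously. -/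
/-! STATEMENT 6: the game on `G₂` (a directed 2-cycle `v₁ → v₂ → v₁` with
terminal moves `(v₁,a₁)`, `(v₂,a₂)`), player `j` controlling `v_j`, with
preferences `o₁ : c > a₁ > a₂` and `o₂ : a₁ > a₂ > c`, has a Nash equilibrium
for each fixed initial position, but no profile is a Nash equilibrium for both
initial positions simultaneously. -/

/-- Outcomes: the terminals `a₁`, `a₂` and the cycle outcome `c`. -/
inductive O2 | t1 | t2 | c
  deriving DecidableEq

/-- Outcome of the play: `b₁`/`b₂` say whether players 1/2 exit to their
terminal; `start = 0` means the play starts at `v₁`, `start = 1` at `v₂`. -/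
def out2 (b1 b2 : Bool) (start : Fin 2) : O2 :=
  if start = 0 then
    (if b1 then O2.t1 else if b2 then O2.t2 else O2.c)
  else
    (if b2 then O2.t2 else if b1 then O2.t1 else O2.c)

/-- Player 1's preference `c > a₁ > a₂` as a rank function. -/
def rank1 : O2 → ℕ
  | O2.c => 2
  | O2.t1 => 1
  | O2.t2 => 0

/-- Player 2's preference `a₁ > a₂ > c` as a rank function. -/
def rank2 : O2 → ℕ
  | O2.t1 => 2
  | O2.t2 => 1
  | O2.c => 0

/-- `(b₁, b₂)` is a Nash equilibrium for the initial position `v`. -/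
def IsNE2 (b1 b2 : Bool) (v : Fin 2) : Prop :=
  (∀ b1' : Bool, rank1 (out2 b1' b2 v) ≤ rank1 (out2 b1 b2 v)) ∧
  (∀ b2' : Bool, rank2 (out2 b1 b2' v) ≤ rank2 (out2 b1 b2 v))

/-- For each initial position a NE exists, but no profile is a NE for both
initial positions simultaneously. -/
theorem G2_NE_for_each_start_but_no_uniform_NE :
    (∀ v : Fin 2, ∃ b1 b2 : Bool, IsNE2 b1 b2 v) ∧
    ¬ ∃ b1 b2 : Bool, ∀ v : Fin 2, IsNE2 b1 b2 v := by
  unfold IsNE2; decide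
end

section
/- Consider the digraph G₃ with non-terminal vertices v₁, v₂, v₃ forming a directed 3-cycle v₁→v₂→v₃→v₁, terminals a₁, a₂, a₃, and matching edges (v_j, a_j); player j controls v_j for j = 1,2,3. With preferences o₁: a₂ > a₁ > a₃ > c, o₂: a₃ > a₂ > a₁ > c, o₃: a₁ > a₃ > a₂ > c, no strategy profile in pure stationary strategies is a subgame perfect Nash equilibrium (i.e., a Nash equilibrium simultaneously for all three initial positions). -/
/-! STATEMENT 7: the three-person game on `G₃` (directed 3-cycle
`v₁ → v₂ → v₃ → v₁` with terminal moves `(v_j, a_j)`, player `j` controlling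
`v_j`) with preferences `o₁ : a₂ > a₁ > a₃ > c`, `o₂ : a₃ > a₂ > a₁ > c`,
`o₃ : a₁ > a₃ > a₂ > c` has no subgame perfect Nash equilibrium in pure
stationary strategies. -/

/-- Outcome of the play from `v_j` under the profile `b` (`b k = true` means
player `k` exits to the terminal `a_k`): the first exiting position among
`j, j+1, j+2`, or the cycle outcome `none`. -/
def out3 (b : Fin 3 → Bool) (j : Fin 3) : Option (Fin 3) :=
  if b j then some j
  else if b (j + 1) then some (j + 1)
  else if b (j + 2) then some (j + 2)
  else none

/-- The preferences `o₁ : a₂ > a₁ > a₃ > c`, `o₂ : a₃ > a₂ > a₁ > c`,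
`o₃ : a₁ > a₃ > a₂ > c` as rank functions: player `i` ranks `a_{i+1}` highest,
then `a_i`, then the remaining terminal, then `c`. -/
def rk3 (i : Fin 3) (o : Option (Fin 3)) : ℕ :=
  match o with
  | none => 0
  | some k => if k = i + 1 then 3 else if k = i then 2 else 1

/-- No profile is a Nash equilibrium simultaneously for all three initial
positions. -/
theorem G3_no_subgame_perfect_NE :
    ¬ ∃ b : Fin 3 → Bool, ∀ (v0 i : Fin 3) (c : Bool),
        rk3 i (out3 (Function.update b i c) v0) ≤ rk3 i (out3 b v0) := by
  decide
end

section
/- With the setup of adding a chance start v₀ with distribution p over all non-terminal positions of a chess-like game (G, D, o): if p_v > 0 for every non-terminal v and s is a Nash equilibrium of (G′, D, o, v₀) (in expected payoffs), then s is a subgame perfect Nash equilibrium of (G, D, o). -/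
/-! `n`-person chess-like games: a finite digraph `(V, edge)` whose vertices are
partitioned, via `owner : V → Option (Fin n)`, into positions of the `n`
players and terminals (`owner v = none`), the terminals being exactly the
vertices without outgoing edges.  Strategies are pure and stationary: a profile
`s : Fin n → V → V` selects an outgoing edge at each player position. -/

section NPerson

variable {n : ℕ} {V : Type*} [Fintype V] [DecidableEq V]

/-- One step of the play under the profile `s` (terminals are fixed points). -/
def nstep (owner : V → Option (Fin n)) (s : Fin n → V → V) (v : V) : V :=
  match owner v with
  | none => v
  | some i => s i v

/-- The vertex reached from `v₀` after `|V|` steps of the play under `s`.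
In an acyclic game this is the terminal where the play ends. -/
def nFinal (owner : V → Option (Fin n)) (s : Fin n → V → V) (v0 : V) : V :=
  (nstep owner s)^[Fintype.card V] v0

/-- Outcome of the play from `v₀` under `s`: `some t` if the play reaches the
terminal `t`, and `none` (the cycle outcome `c`) if it cycles forever. -/
def nOutcome (owner : V → Option (Fin n)) (s : Fin n → V → V) (v0 : V) : Option V :=
  match owner (nFinal owner s v0), nFinal owner s v0 with
  | none, w => some w
  | some _, _ => none

/-- `t` is a valid strategy of player `i`. -/
def nValidFor (edge : V → V → Prop) (owner : V → Option (Fin n)) (i : Fin n)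
    (t : V → V) : Prop :=
  ∀ v, owner v = some i → edge v (t v)

end NPerson

/-! If player `i` gains by deviating from `s` at one start `v₀`, she also has a deviation
that gains at `v₀` and loses nowhere: take an optimal reply `t₁` from `v₀`, and follow `t₁`
on the positions its play from `v₀` visits and `s i` elsewhere. A play of `s` that enters
this path at `x` earns `i` at most her optimal value at `x`, and that value is
non-increasing along any play of `i`'s deviations, so it is at most the value at `v₀`,
which the hybrid deviation secures. Since every start has positive probability, such a
deviation raises the expected payoff, contradicting the equilibrium property of `s` in the
game with a chance start. -/

open Function

theorem Function.iterate_eq_iterate_of_forall_lt {α : Type*} {f g : α → α} {x : α} :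
    ∀ {m : ℕ}, (∀ j < m, g (f^[j] x) = f (f^[j] x)) → g^[m] x = f^[m] x
  | 0, _ => rfl
  | m + 1, h => by
    rw [iterate_succ_apply', iterate_succ_apply',
      iterate_eq_iterate_of_forall_lt fun j hj => h j (Nat.lt_succ_of_lt hj), h m m.lt_succ_self]

theorem Function.iterate_card_eq_of_isFixedPt {α : Type*} [Fintype α] {f : α → α} {x : α}
    {k : ℕ} (hk : IsFixedPt f (f^[k] x)) : f^[Fintype.card α] x = f^[k] x := by
  induction k using Nat.strong_induction_on with
  | _ k ih =>
    by_cases hkN : k ≤ Fintype.card α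
    · rw [← Nat.sub_add_cancel hkN, iterate_add_apply, hk.iterate]
    obtain ⟨a, b, hab, hbk, hcycle⟩ : ∃ a b, a < b ∧ b ≤ k ∧ f^[a] x = f^[b] x := by
      obtain ⟨a, b, hne, heq⟩ := Fintype.exists_ne_map_eq_of_card_lt
        (fun j : Fin (Fintype.card α + 1) => f^[j] x) (by simp)
      rcases Fin.lt_or_lt_of_ne hne with hlt | hlt
      · exact ⟨a, b, hlt, by omega, heq⟩
      · exact ⟨b, a, hlt, by omega, heq.symm⟩
    have hshift : f^[k] x = f^[k - b + a] x := by
      rw [iterate_add_apply, hcycle, ← iterate_add_apply, Nat.sub_add_cancel hbk]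
    rw [hshift] at hk ⊢
    exact ih _ (by omega) hk

theorem Function.iterate_eq_iterate_or_exists_mem {α : Type*} {f g : α → α} {P : Set α}
    (h : ∀ y ∉ P, g y = f y) (x : α) :
    (∀ m, g^[m] x = f^[m] x) ∨ ∃ k, f^[k] x ∈ P ∧ g^[k] x = f^[k] x := by
  classical
  by_cases hentry : ∃ k, f^[k] x ∈ P
  · exact Or.inr ⟨Nat.find hentry, Nat.find_spec hentry,
      iterate_eq_iterate_of_forall_lt fun j hj => h _ (Nat.find_min hentry hj)⟩
  · rw [not_exists] at hentry
    exact Or.inl fun m => iterate_eq_iterate_of_forall_lt fun j _ => h _ (hentry j)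

section Plays

variable {n : ℕ} {V : Type*} {owner : V → Option (Fin n)}

theorem isFixedPt_nstep (q : Fin n → V → V) {v : V} (hv : owner v = none) :
    IsFixedPt (nstep owner q) v := by
  simp [IsFixedPt, nstep, hv]

theorem nstep_update_congr {s : Fin n → V → V} {i : Fin n}
    {τ τ' : V → V} {v : V} (h : owner v = some i → τ v = τ' v) :
    nstep owner (update s i τ) v = nstep owner (update s i τ') v := by
  unfold nstep
  split
  · rfl
  · rename_i j hj
    rcases eq_or_ne j i with rfl | hji
    · simp [h hj]
    · simp [update_of_ne hji]

variable [Fintype V]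

theorem nOutcome_eq_some_iff {q : Fin n → V → V} {v w : V} :
    nOutcome owner q v = some w ↔ owner w = none ∧ ∃ k, (nstep owner q)^[k] v = w := by
  constructor
  · intro h
    rcases hfin : owner (nFinal owner q v) with _ | j
    · simp only [nOutcome, hfin, Option.some.injEq] at h
      exact ⟨h ▸ hfin, _, h⟩
    · simp [nOutcome, hfin] at h
  · rintro ⟨hw, k, rfl⟩
    have hfin : nFinal owner q v = (nstep owner q)^[k] v :=
      iterate_card_eq_of_isFixedPt (isFixedPt_nstep q hw)
    simp [nOutcome, hfin, hw]

theorem nOutcome_congr {q₁ q₂ : Fin n → V → V} {v : V}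
    (h : ∀ m, (nstep owner q₁)^[m] v = (nstep owner q₂)^[m] v) :
    nOutcome owner q₁ v = nOutcome owner q₂ v := by
  unfold nOutcome nFinal
  rw [h]

theorem nOutcome_nstep (q : Fin n → V → V) (v : V) :
    nOutcome owner q (nstep owner q v) = nOutcome owner q v := by
  refine Option.ext fun w => ?_
  simp only [nOutcome_eq_some_iff, and_congr_right_iff]
  intro hw
  constructor
  · rintro ⟨k, hk⟩
    exact ⟨k + 1, hk⟩
  · rintro ⟨k, hk⟩
    refine ⟨k, ?_⟩
    rw [← iterate_succ_apply, iterate_succ_apply', hk]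
    exact isFixedPt_nstep q hw

theorem nOutcome_iterate_nstep (q : Fin n → V → V) (v : V) :
    ∀ k, nOutcome owner q ((nstep owner q)^[k] v) = nOutcome owner q v
  | 0 => rfl
  | k + 1 => by rw [iterate_succ_apply', nOutcome_nstep, nOutcome_iterate_nstep q v k]

end Plays

theorem nValidFor.piecewise {n : ℕ} {V : Type*} {edge : V → V → Prop}
    {owner : V → Option (Fin n)} {i : Fin n} {τ τ' : V → V} (P : Set V)
    [DecidablePred (· ∈ P)] (hτ : nValidFor edge owner i τ) (hτ' : nValidFor edge owner i τ') :
    nValidFor edge owner i (P.piecewise τ τ') := by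
  intro v hv
  by_cases hvP : v ∈ P
  · simpa [hvP] using hτ v hv
  · simpa [hvP] using hτ' v hv

section OptimalValue

variable {n : ℕ} {V : Type*} [Fintype V]
variable (edge : V → V → Prop) (owner : V → Option (Fin n)) (u : Fin n → Option V → ℝ)
  (s : Fin n → V → V) (i : Fin n)

noncomputable def optValue (v : V) : ℝ :=
  sSup ((fun τ => u i (nOutcome owner (update s i τ) v)) '' {τ | nValidFor edge owner i τ})

variable {edge owner u s i}

theorem le_optValue {τ : V → V} (hτ : nValidFor edge owner i τ) (v : V) :
    u i (nOutcome owner (update s i τ) v) ≤ optValue edge owner u s i v :=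
  le_csSup (Set.toFinite _).bddAbove ⟨τ, hτ, rfl⟩

theorem exists_optValue_eq (hsi : nValidFor edge owner i (s i)) (v : V) :
    ∃ τ, nValidFor edge owner i τ ∧
      u i (nOutcome owner (update s i τ) v) = optValue edge owner u s i v :=
  (Set.Nonempty.image (fun τ => u i (nOutcome owner (update s i τ) v))
    (⟨s i, hsi⟩ : {τ | nValidFor edge owner i τ}.Nonempty)).csSup_mem (Set.toFinite _)

/-- An optimal reply from the successor `x` of `v` either returns to `v`, or is not changed
along its play from `x` by prefixing it with the move from `v` to `x`. -/
theorem optValue_nstep_le (hsi : nValidFor edge owner i (s i)) {τ : V → V}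
    (hτ : nValidFor edge owner i τ) (v : V) :
    optValue edge owner u s i (nstep owner (update s i τ) v) ≤ optValue edge owner u s i v := by
  classical
  set x := nstep owner (update s i τ) v
  obtain ⟨σ, hσ, hσx⟩ := exists_optValue_eq hsi x
  rw [← hσx]
  by_cases hreturn : ∃ k, (nstep owner (update s i σ))^[k] x = v
  · obtain ⟨k, hk⟩ := hreturn
    rw [← nOutcome_iterate_nstep _ x k, hk]
    exact le_optValue hσ v
  · rw [not_exists] at hreturn
    set σ' := ({v} : Set V).piecewise τ σ
    have hmove : nstep owner (update s i σ') v = x :=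
      nstep_update_congr fun _ => by simp [σ']
    have hplay : ∀ m, (nstep owner (update s i σ'))^[m] x = (nstep owner (update s i σ))^[m] x :=
      fun m => iterate_eq_iterate_of_forall_lt fun j _ =>
        nstep_update_congr fun _ => by simp [σ', hreturn j]
    calc u i (nOutcome owner (update s i σ) x)
        = u i (nOutcome owner (update s i σ') v) := by
          rw [← nOutcome_nstep _ v, hmove, nOutcome_congr hplay]
      _ ≤ optValue edge owner u s i v := le_optValue (hτ.piecewise {v} hσ) v

theorem optValue_iterate_nstep_le (hsi : nValidFor edge owner i (s i)) {τ : V → V}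
    (hτ : nValidFor edge owner i τ) (v : V) :
    ∀ k, optValue edge owner u s i ((nstep owner (update s i τ))^[k] v) ≤
      optValue edge owner u s i v
  | 0 => le_rfl
  | k + 1 => by
    rw [iterate_succ_apply']
    exact (optValue_nstep_le hsi hτ _).trans (optValue_iterate_nstep_le hsi hτ v k)

end OptimalValue

section Hybrid

variable {n : ℕ} {V : Type*} {owner : V → Option (Fin n)} {s : Fin n → V → V}
  {i : Fin n} {P : Set V} [DecidablePred (· ∈ P)]

theorem nOutcome_piecewise_of_mem [Fintype V] {τ τ' : V → V}
    (hP : Set.MapsTo (nstep owner (update s i τ)) P P) {x : V} (hx : x ∈ P) :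
    nOutcome owner (update s i (P.piecewise τ τ')) x = nOutcome owner (update s i τ) x :=
  nOutcome_congr fun _ => iterate_eq_iterate_of_forall_lt fun j _ =>
    nstep_update_congr fun _ => P.piecewise_eq_of_mem _ _ (hP.iterate j hx)

theorem nstep_piecewise_of_notMem (τ : V → V) {y : V} (hy : y ∉ P) :
    nstep owner (update s i (P.piecewise τ (s i))) y = nstep owner s y := by
  rw [nstep_update_congr (τ' := s i) fun _ => P.piecewise_eq_of_notMem _ _ hy, update_eq_self]

end Hybrid

theorem exists_deviation_forall_le_and_lt {n : ℕ} {V : Type*} [Fintype V]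
    {edge : V → V → Prop} {owner : V → Option (Fin n)} {u : Fin n → Option V → ℝ}
    {s : Fin n → V → V} {i : Fin n} (hsi : nValidFor edge owner i (s i)) {t : V → V}
    (ht : nValidFor edge owner i t) {v₀ : V}
    (hlt : u i (nOutcome owner s v₀) < u i (nOutcome owner (update s i t) v₀)) :
    ∃ t', nValidFor edge owner i t' ∧
      (∀ v, u i (nOutcome owner s v) ≤ u i (nOutcome owner (update s i t') v)) ∧
      u i (nOutcome owner s v₀) < u i (nOutcome owner (update s i t') v₀) := by
  classical
  obtain ⟨t₁, ht₁, hopt⟩ := exists_optValue_eq (u := u) hsi v₀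
  set P := Set.range fun k => (nstep owner (update s i t₁))^[k] v₀
  set t' := P.piecewise t₁ (s i)
  have hmaps : Set.MapsTo (nstep owner (update s i t₁)) P P := by
    rintro _ ⟨k, rfl⟩
    exact ⟨k + 1, iterate_succ_apply' _ _ _⟩
  have hout : ∀ x ∈ P, nOutcome owner (update s i t') x = nOutcome owner (update s i t₁) v₀ := by
    intro x hx
    rw [nOutcome_piecewise_of_mem hmaps hx]
    obtain ⟨k, rfl⟩ := hx
    exact nOutcome_iterate_nstep _ _ k
  have hon : ∀ x ∈ P, u i (nOutcome owner s x) ≤ u i (nOutcome owner (update s i t') x) := by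
    rintro _ ⟨k, rfl⟩
    calc u i (nOutcome owner s _)
        ≤ optValue edge owner u s i _ := by
          simpa only [update_eq_self] using le_optValue (u := u) (s := s) hsi _
      _ ≤ optValue edge owner u s i v₀ := optValue_iterate_nstep_le hsi ht₁ v₀ k
      _ = _ := by rw [hout _ ⟨k, rfl⟩, hopt]
  refine ⟨t', ht₁.piecewise P hsi, fun v => ?_, hlt.trans_le ?_⟩
  · rcases iterate_eq_iterate_or_exists_mem (fun _ => nstep_piecewise_of_notMem (P := P) t₁) v with
      hagree | ⟨k, hkP, hk⟩
    · exact (congrArg (u i) (nOutcome_congr hagree)).ge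
    · rw [← nOutcome_iterate_nstep s v k, ← nOutcome_iterate_nstep (update s i t') v k, hk]
      exact hon _ hkP
  · rw [hout v₀ ⟨0, rfl⟩, hopt]
    exact le_optValue ht v₀

theorem NE_with_chance_start_gives_subgame_perfect_NE_general
    {n : ℕ} {V : Type*} [Fintype V]
    (edge : V → V → Prop) (owner : V → Option (Fin n))
    (u : Fin n → Option V → ℝ)
    (s : Fin n → V → V) (hs : ∀ i, nValidFor edge owner i (s i))
    (p : V → ℝ) (hp : ∀ v, owner v ≠ none → 0 < p v)
    (hNE : ∀ (i : Fin n) (t : V → V), nValidFor edge owner i t →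
      ∑ v ∈ Finset.univ.filter (fun v => owner v ≠ none),
        p v * u i (nOutcome owner (Function.update s i t) v) ≤
      ∑ v ∈ Finset.univ.filter (fun v => owner v ≠ none),
        p v * u i (nOutcome owner s v)) :
    ∀ (v0 : V), owner v0 ≠ none →
      ∀ (i : Fin n) (t : V → V), nValidFor edge owner i t →
        u i (nOutcome owner (Function.update s i t) v0) ≤
        u i (nOutcome owner s v0) := by
  intro v₀ hv₀ i t ht
  by_contra! hlt
  obtain ⟨t', ht', hle, hlt'⟩ := exists_deviation_forall_le_and_lt (hs i) ht hlt
  refine (hNE i t' ht').not_gt (Finset.sum_lt_sum (fun v hv => ?_) ⟨v₀, by simpa using hv₀, ?_⟩)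
  · exact mul_le_mul_of_nonneg_left (hle v) (hp v (Finset.mem_filter.mp hv).2).le
  · exact mul_lt_mul_of_pos_left hlt' (hp v₀ hv₀)

/-- conversely, if every non-terminal position gets positive
probability `p v > 0` and `s` is a Nash equilibrium (in expected payoffs) of
the game with the added chance start, then `s` is a subgame perfect Nash
equilibrium of the original chess-like game, i.e. a Nash equilibrium from every
non-terminal initial position. -/
theorem NE_with_chance_start_gives_subgame_perfect_NE
    {n : ℕ} {V : Type*} [Fintype V] [DecidableEq V]
    (edge : V → V → Prop) (owner : V → Option (Fin n))
    (hterm : ∀ v, owner v = none ↔ ∀ w, ¬ edge v w)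
    (u : Fin n → Option V → ℝ)
    (s : Fin n → V → V) (hs : ∀ i, nValidFor edge owner i (s i))
    (p : V → ℝ) (hp : ∀ v, owner v ≠ none → 0 < p v)
    (hp1 : ∑ v ∈ Finset.univ.filter (fun v => owner v ≠ none), p v = 1)
    (hNE : ∀ (i : Fin n) (t : V → V), nValidFor edge owner i t →
      ∑ v ∈ Finset.univ.filter (fun v => owner v ≠ none),
        p v * u i (nOutcome owner (Function.update s i t) v) ≤
      ∑ v ∈ Finset.univ.filter (fun v => owner v ≠ none),
        p v * u i (nOutcome owner s v)) :
    ∀ (v0 : V), owner v0 ≠ none →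
      ∀ (i : Fin n) (t : V → V), nValidFor edge owner i t →
        u i (nOutcome owner (Function.update s i t) v0) ≤
        u i (nOutcome owner s v0) :=
  NE_with_chance_start_gives_subgame_perfect_NE_general edge owner u s hs p hp hNE
end

section
/- In a chess-like game in which every player controls exactly one position, if the digraph consists of a single directed cycle through the n player positions with one terminal move (v_j, a_j) at each position, and the cycle outcome c is ranked by each player's strict preference (arbitrary), then for every fixed initial position the game has a Nash equilibrium in pure stationary strategies. -/
/-! STATEMENT 13: the `n`-person chess-like game on the digraph `G_n` (a
directed `n`-cycle on `v₁, …, vₙ` with one terminal move `(v_j, a_j)` at each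
position, player `j` controlling exactly `v_j`) has, for every preference
profile (arbitrary strict total orders on the outcomes, the cycle outcome `c`
ranked arbitrarily) and every fixed initial position, a Nash equilibrium in
pure stationary strategies.

We index positions and terminals by `Fin n`; the outcome `some k` is the
terminal `a_k` and `none` is the cycle outcome `c`. -/

/-- Outcome of the play from `v_j` under the profile `b` (`b k = true` means
player `k` exits to `a_k`): the first exiting position around the cycle, or
the cycle outcome `none`. -/
def cycOut {n : ℕ} [NeZero n] (b : Fin n → Bool) (j : Fin n) : Option (Fin n) :=
  if h : (Finset.univ.filter fun k : Fin n => b (j + k) = true).Nonempty then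
    some (j + (Finset.univ.filter fun k : Fin n => b (j + k) = true).min' h)
  else none

namespace CGAux

variable {n : ℕ} [NeZero n]

/-- Outcome (terminal of first exiting offset `≥ m`, or `none`). -/
noncomputable def Gg (j0 : Fin n) (γ : Fin n → Bool) (m : ℕ) : Option (Fin n) :=
  if h : (Finset.univ.filter fun k : Fin n => m ≤ k.val ∧ γ k = true).Nonempty then
    some (j0 + (Finset.univ.filter fun k : Fin n => m ≤ k.val ∧ γ k = true).min' h)
  else none

lemma Gg_eq_some_iff (j0 : Fin n) (γ : Fin n → Bool) (m : ℕ) (k : Fin n) :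
    Gg j0 γ m = some (j0 + k) ↔
      m ≤ k.val ∧ γ k = true ∧ ∀ l : Fin n, m ≤ l.val → γ l = true → k.val ≤ l.val := by
  unfold Gg
  split_ifs with h
  · simp only [Option.some.injEq]
    constructor
    · intro he
      have hk : (Finset.univ.filter fun k : Fin n => m ≤ k.val ∧ γ k = true).min' h = k :=
        add_left_cancel he
      have hmem := Finset.min'_mem (Finset.univ.filter fun k : Fin n => m ≤ k.val ∧ γ k = true) h
      rw [hk] at hmem
      simp only [Finset.mem_filter, Finset.mem_univ, true_and] at hmem
      refine ⟨hmem.1, hmem.2, fun l hl hγ => ?_⟩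
      have hle : (Finset.univ.filter fun k : Fin n => m ≤ k.val ∧ γ k = true).min' h ≤ l :=
        Finset.min'_le _ l (by simp [hl, hγ])
      rw [hk] at hle
      exact hle
    · rintro ⟨h1, h2, h3⟩
      have hkm : k ∈ Finset.univ.filter fun k : Fin n => m ≤ k.val ∧ γ k = true := by
        simp [h1, h2]
      have h4 := Finset.min'_le _ k hkm
      have hmem := Finset.min'_mem (Finset.univ.filter fun k : Fin n => m ≤ k.val ∧ γ k = true) h
      simp only [Finset.mem_filter, Finset.mem_univ, true_and] at hmem
      have h5 : k ≤ (Finset.univ.filter fun k : Fin n => m ≤ k.val ∧ γ k = true).min' h :=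
        h3 _ hmem.1 hmem.2
      rw [le_antisymm h4 h5]
  · constructor
    · intro he; cases he
    · rintro ⟨h1, h2, -⟩
      exact absurd ⟨k, by simp [h1, h2]⟩ h

lemma Gg_some_of (j0 : Fin n) (γ : Fin n → Bool) (m : ℕ) (k : Fin n)
    (hk : m ≤ k.val) (hγ : γ k = true) :
    ∃ k0 : Fin n, Gg j0 γ m = some (j0 + k0) ∧ m ≤ k0.val ∧ γ k0 = true ∧
      ∀ l : Fin n, m ≤ l.val → γ l = true → k0.val ≤ l.val := by
  have hne : (Finset.univ.filter fun k : Fin n => m ≤ k.val ∧ γ k = true).Nonempty :=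
    ⟨k, by simp [hk, hγ]⟩
  refine ⟨(Finset.univ.filter fun k : Fin n => m ≤ k.val ∧ γ k = true).min' hne, ?_, ?_, ?_, ?_⟩
  · unfold Gg; rw [dif_pos hne]
  · have := Finset.min'_mem (Finset.univ.filter fun k : Fin n => m ≤ k.val ∧ γ k = true) hne
    simp only [Finset.mem_filter, Finset.mem_univ, true_and] at this
    exact this.1
  · have := Finset.min'_mem (Finset.univ.filter fun k : Fin n => m ≤ k.val ∧ γ k = true) hne
    simp only [Finset.mem_filter, Finset.mem_univ, true_and] at this
    exact this.2
  · intro l hl hγl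
    exact Finset.min'_le _ l (by simp [hl, hγl])

lemma Gg_congr (j0 : Fin n) (γ γ' : Fin n → Bool) (m m' : ℕ)
    (h : ∀ k : Fin n, (m ≤ k.val ∧ γ k = true) ↔ (m' ≤ k.val ∧ γ' k = true)) :
    Gg j0 γ m = Gg j0 γ' m' := by
  have hs : (Finset.univ.filter fun k : Fin n => m ≤ k.val ∧ γ k = true)
      = Finset.univ.filter fun k : Fin n => m' ≤ k.val ∧ γ' k = true := by
    ext k; simpa using h k
  unfold Gg
  rw [hs]

lemma cycOut_eq_Gg (j0 : Fin n) (b' : Fin n → Bool) :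
    cycOut b' j0 = Gg j0 (fun k => b' (j0 + k)) 0 := by
  have hs : (Finset.univ.filter fun k : Fin n => b' (j0 + k) = true)
      = Finset.univ.filter fun k : Fin n => 0 ≤ k.val ∧ b' (j0 + k) = true := by
    ext k; simp
  unfold cycOut Gg
  rw [hs]

/-- offset `n - (t+1)` as an element of `Fin n`. -/
def off (n : ℕ) [NeZero n] (t : ℕ) : Fin n :=
  ⟨n - (t + 1), Nat.sub_lt (Nat.pos_of_ne_zero (NeZero.ne n)) t.succ_pos⟩

open Classical in
/-- `V pref j0 t` : the backward-induction outcome starting at offset `n - t`. -/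
noncomputable def V (pref : Fin n → Option (Fin n) → Option (Fin n) → Prop) (j0 : Fin n) :
    ℕ → Option (Fin n)
  | 0 => none
  | (t + 1) =>
    if pref (j0 + off n t) (some (j0 + off n t)) (V pref j0 t) then some (j0 + off n t)
    else V pref j0 t

/-- The greedy strategy profile, in offset coordinates. -/
noncomputable def bbeta (pref : Fin n → Option (Fin n) → Option (Fin n) → Prop)
    (j0 : Fin n) (k : Fin n) : Bool :=
  decide (V pref j0 (n - k.val) = some (j0 + k))

lemma V_eq_Gg (pref : Fin n → Option (Fin n) → Option (Fin n) → Prop) (j0 : Fin n) :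
    ∀ t, t ≤ n → V pref j0 t = Gg j0 (bbeta pref j0) (n - t) := by
  intro t
  induction t with
  | zero =>
    intro _
    have h0 : Gg j0 (bbeta pref j0) (n - 0) = none := by
      unfold Gg
      rw [dif_neg]
      rintro ⟨k, hk⟩
      simp only [Finset.mem_filter, Finset.mem_univ, true_and] at hk
      have := k.isLt
      omega
    rw [h0]
    rfl
  | succ t ih =>
    intro ht
    have ht' : t ≤ n := Nat.le_of_succ_le ht
    have ihe := ih ht'
    have hoff : (off n t : Fin n).val = n - (t + 1) := rfl
    have h1 : n - (off n t : Fin n).val = t + 1 := by rw [hoff]; omega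
    have h2 : n - t = (off n t : Fin n).val + 1 := by rw [hoff]; omega
    by_cases hC : pref (j0 + off n t) (some (j0 + off n t)) (V pref j0 t)
    · have hV : V pref j0 (t + 1) = some (j0 + off n t) := by
        rw [V, if_pos hC]
      have hb : bbeta pref j0 (off n t) = true := by
        rw [bbeta, h1, hV]; simp
      rw [hV]
      symm
      rw [Gg_eq_some_iff]
      exact ⟨le_refl _, hb, fun l hl _ => hl⟩
    · have hV : V pref j0 (t + 1) = V pref j0 t := by
        rw [V, if_neg hC]
      have hb : bbeta pref j0 (off n t) = false := by
        rw [bbeta, h1]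
        simp only [decide_eq_false_iff_not]
        intro he
        rw [hV, ihe, h2, Gg_eq_some_iff] at he
        omega
      rw [hV, ihe]
      apply Gg_congr
      intro k
      constructor
      · rintro ⟨hk1, hk2⟩
        exact ⟨by omega, hk2⟩
      · rintro ⟨hk1, hk2⟩
        refine ⟨?_, hk2⟩
        by_cases hkk : k.val = (off n t : Fin n).val
        · exfalso
          have : k = off n t := Fin.ext hkk
          rw [this, hb] at hk2
          cases hk2
        · omega

end CGAux

/-- For every preference profile `pref` (strict total orders; `pref i x y`
means player `i` strictly prefers `x` to `y`) and every initial position `j₀`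
the game on `G_n` has a Nash equilibrium in pure stationary strategies. -/
theorem cycle_game_one_position_per_player_Nash_solvable
    {n : ℕ} [NeZero n]
    (pref : Fin n → Option (Fin n) → Option (Fin n) → Prop)
    (hord : ∀ i, IsStrictTotalOrder (Option (Fin n)) (pref i))
    (j0 : Fin n) :
    ∃ b : Fin n → Bool, ∀ (i : Fin n) (c : Bool),
      ¬ pref i (cycOut (Function.update b i c) j0) (cycOut b j0) := by
  classical
  set B := CGAux.bbeta pref j0 with hB
  refine ⟨fun m => B (m - j0), ?_⟩
  intro i c
  haveI := hord i
  have hasym : ∀ x y, pref i x y → ¬ pref i y x := fun x y hxy hyx =>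
    irrefl_of (pref i) x (trans_of (pref i) hxy hyx)
  have hirr : ∀ x, ¬ pref i x x := fun x => irrefl_of (pref i) x
  set K : Fin n := i - j0 with hKdef
  have hiK : j0 + K = i := by rw [hKdef, add_comm, sub_add_cancel]
  -- rewrite old outcome
  have hbfun : (fun k : Fin n => (fun m => B (m - j0)) (j0 + k)) = B := by
    funext k; simp [add_sub_cancel_left]
  have hold : cycOut (fun m => B (m - j0)) j0 = CGAux.Gg j0 B 0 := by
    rw [CGAux.cycOut_eq_Gg, hbfun]
  -- rewrite new outcome
  have hupd : (fun k : Fin n =>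
      (Function.update (fun m => B (m - j0)) i c) (j0 + k)) =
      fun k => if k = K then c else B k := by
    funext k
    rw [Function.update_apply]
    by_cases hk : k = K
    · rw [if_pos (by rw [hk, hiK]), if_pos hk]
    · have hne : j0 + k ≠ i := by
        rw [← hiK]; intro h; exact hk (add_left_cancel h)
      rw [if_neg hne, if_neg hk, add_sub_cancel_left]
  have hnew : cycOut (Function.update (fun m => B (m - j0)) i c) j0 =
      CGAux.Gg j0 (fun k => if k = K then c else B k) 0 := by
    rw [CGAux.cycOut_eq_Gg, hupd]
  rw [hold, hnew]
  set γ' : Fin n → Bool := fun k => if k = K then c else B k with hγ'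
  -- arithmetic setup
  have hKlt : K.val < n := K.isLt
  set t : ℕ := n - K.val - 1 with htdef
  have h1 : n - K.val = t + 1 := by omega
  have h2 : n - t = K.val + 1 := by omega
  have ht : t ≤ n := by omega
  have hoffK : CGAux.off n t = K := by
    apply Fin.ext
    show n - (t + 1) = K.val
    omega
  have hVt : CGAux.V pref j0 t = CGAux.Gg j0 B (K.val + 1) := by
    rw [CGAux.V_eq_Gg pref j0 t ht, h2, hB]
  have hVsucc : CGAux.V pref j0 (t + 1) =
      if pref i (some i) (CGAux.V pref j0 t) then some i else CGAux.V pref j0 t := by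
    rw [CGAux.V, hoffK, hiK]
  have hβK : B K = decide (CGAux.V pref j0 (t + 1) = some i) := by
    rw [hB, CGAux.bbeta, h1, hiK]
  by_cases hc : c = B K
  · -- no actual change
    have hsame : γ' = B := by
      funext k
      simp only [hγ']
      by_cases hk : k = K
      · rw [if_pos hk, hc, hk]
      · rw [if_neg hk]
    rw [hsame]
    exact hirr _
  · by_cases hbK : B K = true
    · -- c = false : player i stops exiting
      have hcf : c = false := by
        cases c
        · rfl
        · exact absurd hbK.symm hc
      have hVt1 : CGAux.V pref j0 (t + 1) = some i := by
        have := hβK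
        rw [hbK] at this
        exact of_decide_eq_true this.symm
      have hCC : pref i (some i) (CGAux.V pref j0 t) := by
        by_contra hnC
        rw [hVsucc, if_neg hnC, hVt, ← hiK, CGAux.Gg_eq_some_iff] at hVt1
        omega
      obtain ⟨m0, hold_eq, -, hm0β, hm0min⟩ :=
        CGAux.Gg_some_of j0 B 0 K (Nat.zero_le _) hbK
      by_cases hm0K : m0 = K
      · -- K was the first exit; deviation outcome is V t
        have hnewK : CGAux.Gg j0 γ' 0 = CGAux.Gg j0 B (K.val + 1) := by
          apply CGAux.Gg_congr
          intro k
          constructor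
          · rintro ⟨-, hk⟩
            simp only [hγ'] at hk
            by_cases hkk : k = K
            · rw [if_pos hkk, hcf] at hk; cases hk
            · rw [if_neg hkk] at hk
              refine ⟨?_, hk⟩
              have := hm0min k (Nat.zero_le _) hk
              rw [hm0K] at this
              have hkval : k.val ≠ K.val := fun hv => hkk (Fin.ext hv)
              omega
          · rintro ⟨hk1, hk2⟩
            refine ⟨Nat.zero_le _, ?_⟩
            simp only [hγ']
            rw [if_neg (fun hkk : k = K => by omega)]
            exact hk2
        rw [hold_eq, hm0K, hiK, hnewK, ← hVt]
        exact hasym _ _ hCC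
      · -- the first exit m0 is before K; outcome unchanged
        have hm0lt : m0.val < K.val := by
          have h4 := hm0min K (Nat.zero_le _) hbK
          have : m0.val ≠ K.val := fun hv => hm0K (Fin.ext hv)
          omega
        have hnew2 : CGAux.Gg j0 γ' 0 = some (j0 + m0) := by
          rw [CGAux.Gg_eq_some_iff]
          refine ⟨Nat.zero_le _, ?_, ?_⟩
          · simp only [hγ']
            rw [if_neg (fun h : m0 = K => hm0K h)]
            exact hm0β
          · intro l _ hl
            simp only [hγ'] at hl
            by_cases hlk : l = K
            · rw [hlk]; omega
            · rw [if_neg hlk] at hl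
              exact hm0min l (Nat.zero_le _) hl
        rw [hnew2, hold_eq]
        exact hirr _
    · -- B K = false, c = true : player i starts exiting
      have hbKf : B K = false := by simpa using hbK
      have hcf : c = true := by
        cases c
        · exact absurd hbKf.symm hc
        · rfl
      have hVt1ne : CGAux.V pref j0 (t + 1) ≠ some i := by
        intro he
        rw [hβK, he] at hbKf
        simp at hbKf
      have hnC : ¬ pref i (some i) (CGAux.V pref j0 t) := by
        intro hCC
        exact hVt1ne (by rw [hVsucc, if_pos hCC])
      by_cases hlow : ∃ l : Fin n, l.val < K.val ∧ B l = true
      · -- someone exits before K anyway; outcome unchanged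
        obtain ⟨l0, hl0, hl0β⟩ := hlow
        obtain ⟨m0, hold_eq, -, hm0β, hm0min⟩ :=
          CGAux.Gg_some_of j0 B 0 l0 (Nat.zero_le _) hl0β
        have hm0lt : m0.val < K.val :=
          lt_of_le_of_lt (hm0min l0 (Nat.zero_le _) hl0β) hl0
        have hnew2 : CGAux.Gg j0 γ' 0 = some (j0 + m0) := by
          rw [CGAux.Gg_eq_some_iff]
          refine ⟨Nat.zero_le _, ?_, ?_⟩
          · simp only [hγ']
            rw [if_neg (fun h : m0 = K => by rw [h] at hm0lt; omega)]
            exact hm0β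
          · intro l _ hl
            simp only [hγ'] at hl
            by_cases hlk : l = K
            · rw [hlk]; omega
            · rw [if_neg hlk] at hl
              exact hm0min l (Nat.zero_le _) hl
        rw [hnew2, hold_eq]
        exact hirr _
      · -- nobody exits before K: old outcome = V t, new outcome = some i
        push_neg at hlow
        have hold2 : CGAux.Gg j0 B 0 = CGAux.Gg j0 B (K.val + 1) := by
          apply CGAux.Gg_congr
          intro k
          constructor
          · rintro ⟨-, hk⟩
            refine ⟨?_, hk⟩
            have hk1 : ¬ k.val < K.val := fun hlt => hlow k hlt hk
            have hk2 : k.val ≠ K.val := fun hv => by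
              rw [Fin.ext hv, hbKf] at hk; cases hk
            omega
          · rintro ⟨hk1, hk2⟩
            exact ⟨Nat.zero_le _, hk2⟩
        have hnew3 : CGAux.Gg j0 γ' 0 = some (j0 + K) := by
          rw [CGAux.Gg_eq_some_iff]
          refine ⟨Nat.zero_le _, ?_, ?_⟩
          · simp [hγ', hcf]
          · intro l _ hl
            simp only [hγ'] at hl
            by_cases hlk : l = K
            · rw [hlk]
            · rw [if_neg hlk] at hl
              by_contra hcon
              exact hlow l (by omega) hl
        rw [hnew3, hold2, ← hVt, hiK]
        exact hnC
end
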